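/- (Prior reweighting theorem, main statement) Let p(u,w) be a positive joint density, Q ⊆ U × W measurable with complement Qᶜ, and r : U × W → (0,1] a measurable 'guidance acceptance' function (r(u,w) = p(Y=1|u,w)). For γ > 0 define the acceptance-conditioned probability of success E(γ) = A(γ)/(A(γ) + B(γ)), where A(γ) = ∫_Q r(u,w) p(u|w) p(w)^γ d(u,w) and B(γ) = ∫_{Qᶜ} r(u,w) p(u|w) p(w)^γ d(u,w). Define F(γ) as the difference between the r·p^γ-weighted averages of ln p(w) over Q and over Qᶜ. Assuming differentiation under the integral is valid and A(γ), B(γ) ∈ (0,∞) near γ = 1: if F(1) < 0 then there exists γ₋ < 1 with E(γ₋) > E(1); if F(1) > 0 then there exists γ₊ > 1 with E(γ₊) > E(1). -/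
import Mathlib


open MeasureTheory Real Filter

lemma deriv_neg_exists_lt {f : ℝ → ℝ} {d : ℝ} (hf : HasDerivAt f d 1) (hd : d < 0) :
    ∃ γ, γ < 1 ∧ f 1 < f γ := by
  have h := hasDerivAt_iff_tendsto_slope.mp hf
  have h2 : ∀ᶠ x in nhdsWithin 1 {(1:ℝ)}ᶜ, slope f 1 x < 0 :=
    h.eventually_lt_const hd
  have hle : nhdsWithin (1:ℝ) (Set.Iio 1) ≤ nhdsWithin 1 {(1:ℝ)}ᶜ :=
    nhdsWithin_mono _ (fun x hx => ne_of_lt hx)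
  have h3 : ∀ᶠ x in nhdsWithin (1:ℝ) (Set.Iio 1), slope f 1 x < 0 := h2.filter_mono hle
  have h4 : ∀ᶠ x in nhdsWithin (1:ℝ) (Set.Iio 1), x < 1 :=
    eventually_mem_nhdsWithin
  obtain ⟨x, hx1, hx2⟩ := (h3.and h4).exists
  refine ⟨x, hx2, ?_⟩
  have hne : x - 1 < 0 := sub_neg.mpr hx2
  have : f x - f 1 = slope f 1 x * (x - 1) := by
    rw [slope_def_field, div_mul_cancel₀ _ (sub_ne_zero.mpr hx2.ne)]
  nlinarith [mul_pos_of_neg_of_neg hx1 hne]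

lemma deriv_pos_exists_gt {f : ℝ → ℝ} {d : ℝ} (hf : HasDerivAt f d 1) (hd : 0 < d) :
    ∃ γ, 1 < γ ∧ f 1 < f γ := by
  have h := hasDerivAt_iff_tendsto_slope.mp hf
  have h2 : ∀ᶠ x in nhdsWithin 1 {(1:ℝ)}ᶜ, 0 < slope f 1 x :=
    h.eventually_const_lt hd
  have hle : nhdsWithin (1:ℝ) (Set.Ioi 1) ≤ nhdsWithin 1 {(1:ℝ)}ᶜ :=
    nhdsWithin_mono _ (fun x hx => ne_of_gt hx)
  have h3 : ∀ᶠ x in nhdsWithin (1:ℝ) (Set.Ioi 1), 0 < slope f 1 x := h2.filter_mono hle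
  have h4 : ∀ᶠ x in nhdsWithin (1:ℝ) (Set.Ioi 1), 1 < x :=
    eventually_mem_nhdsWithin
  obtain ⟨x, hx1, hx2⟩ := (h3.and h4).exists
  refine ⟨x, hx2, ?_⟩
  have hne : 0 < x - 1 := sub_pos.mpr hx2
  have : f x - f 1 = slope f 1 x * (x - 1) := by
    rw [slope_def_field, div_mul_cancel₀ _ (sub_ne_zero.mpr hx2.ne')]
  nlinarith [mul_pos hx1 hne]

/-- main prior-reweighting theorem: with
`A(γ) = ∫_Q r p(u|w) p(w)^γ`, `B(γ) = ∫_{Qᶜ} r p(u|w) p(w)^γ`,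
`E(γ) = A(γ)/(A(γ)+B(γ))` and `F(γ)` the difference of the weighted averages of
`ln p(w)` over `Q` and `Qᶜ`: if `F(1) < 0` there exists `γ₋ < 1` with `E(γ₋) > E(1)`,
and if `F(1) > 0` there exists `γ₊ > 1` with `E(γ₊) > E(1)`. -/
theorem prior_reweighting_main
    {U W : Type*} [MeasurableSpace U] [MeasurableSpace W]
    (μ : Measure U) (ν : Measure W) [SigmaFinite μ] [SigmaFinite ν]
    (pw : W → ℝ) (pcond : U × W → ℝ) (r : U × W → ℝ)
    (hpw : ∀ w, 0 < pw w) (hpcond : ∀ z, 0 < pcond z)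
    (hr : ∀ z, r z ∈ Set.Ioc (0:ℝ) 1)
    (Q : Set (U × W)) (hQ : MeasurableSet Q)
    (A B : ℝ → ℝ)
    (hA_def : ∀ γ, A γ = ∫ z in Q, r z * pcond z * (pw z.2) ^ γ ∂(μ.prod ν))
    (hB_def : ∀ γ, B γ = ∫ z in Qᶜ, r z * pcond z * (pw z.2) ^ γ ∂(μ.prod ν))
    -- A and B are positive (and finite) near γ = 1
    (hpos : ∀ᶠ γ in nhds (1:ℝ), 0 < A γ ∧ 0 < B γ)
    -- differentiation under the integral sign at γ = 1
    (hA' : HasDerivAt A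
      (∫ z in Q, r z * pcond z * (pw z.2) ^ (1:ℝ) * Real.log (pw z.2) ∂(μ.prod ν)) 1)
    (hB' : HasDerivAt B
      (∫ z in Qᶜ, r z * pcond z * (pw z.2) ^ (1:ℝ) * Real.log (pw z.2) ∂(μ.prod ν)) 1)
    (Efun : ℝ → ℝ)
    (hE_def : ∀ γ, Efun γ = A γ / (A γ + B γ))
    (F : ℝ)
    (hF_def : F =
      (∫ z in Q, r z * pcond z * (pw z.2) ^ (1:ℝ) * Real.log (pw z.2) ∂(μ.prod ν)) / A 1 -
      (∫ z in Qᶜ, r z * pcond z * (pw z.2) ^ (1:ℝ) * Real.log (pw z.2) ∂(μ.prod ν)) / B 1) :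
    (F < 0 → ∃ γ, γ < 1 ∧ Efun 1 < Efun γ) ∧
    (0 < F → ∃ γ, 1 < γ ∧ Efun 1 < Efun γ) := by
  set IA := ∫ z in Q, r z * pcond z * (pw z.2) ^ (1:ℝ) * Real.log (pw z.2) ∂(μ.prod ν) with hIA
  set IB := ∫ z in Qᶜ, r z * pcond z * (pw z.2) ^ (1:ℝ) * Real.log (pw z.2) ∂(μ.prod ν) with hIB
  obtain ⟨ha, hb⟩ := hpos.self_of_nhds
  have hab : A 1 + B 1 ≠ 0 := by positivity
  have hEeq : Efun = fun γ => A γ / (A γ + B γ) := funext hE_def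
  have hE' : HasDerivAt Efun ((IA * (A 1 + B 1) - A 1 * (IA + IB)) / (A 1 + B 1) ^ 2) 1 := by
    rw [hEeq]
    exact hA'.div (hA'.add hB') hab
  have hnum : IA * (A 1 + B 1) - A 1 * (IA + IB) = IA * B 1 - A 1 * IB := by ring
  have hden : (0:ℝ) < (A 1 + B 1) ^ 2 := by positivity
  constructor
  · intro hF
    have hlt : IA * B 1 < A 1 * IB := by
      rw [hF_def, sub_neg, div_lt_div_iff₀ ha hb] at hF
      linarith
    have hd : (IA * (A 1 + B 1) - A 1 * (IA + IB)) / (A 1 + B 1) ^ 2 < 0 := by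
      apply div_neg_of_neg_of_pos _ hden
      rw [hnum]; linarith
    exact deriv_neg_exists_lt hE' hd
  · intro hF
    have hlt : A 1 * IB < IA * B 1 := by
      rw [hF_def, sub_pos, div_lt_div_iff₀ hb ha] at hF
      linarith
    have hd : 0 < (IA * (A 1 + B 1) - A 1 * (IA + IB)) / (A 1 + B 1) ^ 2 := by
      apply div_pos _ hden
      rw [hnum]; linarith
    exact deriv_pos_exists_gt hE' hd
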